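/- arXiv:1802.03703 — 2 statements merged into one kernel-verified Lean document; each statement's English description precedes it below -/
import Mathlib

section
/- Let A be an n×n real symmetric positive definite matrix with eigenvalues 0 < λ_1 ≤ λ_2 ≤ … ≤ λ_n, and let p be any probability vector (p_i > 0, Σ_i p_i = 1). Then the smallest eigenvalue of W(p) := A^{1/2} Diag(p_1/A_{11}, …, p_n/A_{nn}) A^{1/2} satisfies λ_min(W(p)) ≤ (1/n)·(∏_{k=1}^n λ_k/A_{kk})^{1/n}. -/
open Matrix BigOperators Finset

/-- The iteration matrix `W(p) = A^{1/2} Diag(p_i / A_{ii}) A^{1/2}` of randomized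
coordinate descent with probabilities `p`. -/
noncomputable def Wrcd {n : ℕ} (A : Matrix (Fin n) (Fin n) ℝ) (hA : A.PosDef)
    (p : Fin n → ℝ) : Matrix (Fin n) (Fin n) ℝ :=
  (hA.posSemidef.1.eigenvectorUnitary.1 *
      Matrix.diagonal ((↑) ∘ (hA.posSemidef.1.eigenvalues · |>.sqrt)) *
      (star hA.posSemidef.1.eigenvectorUnitary : Matrix (Fin n) (Fin n) ℝ)) *
    Matrix.diagonal (fun i => p i / A i i) *
    (hA.posSemidef.1.eigenvectorUnitary.1 *
      Matrix.diagonal ((↑) ∘ (hA.posSemidef.1.eigenvalues · |>.sqrt)) *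
      (star hA.posSemidef.1.eigenvectorUnitary : Matrix (Fin n) (Fin n) ℝ))

noncomputable def sqrtA {n : ℕ} {A : Matrix (Fin n) (Fin n) ℝ} (hA : A.PosDef) :
    Matrix (Fin n) (Fin n) ℝ :=
  hA.posSemidef.1.eigenvectorUnitary.1 *
      Matrix.diagonal ((↑) ∘ (hA.posSemidef.1.eigenvalues · |>.sqrt)) *
      (star hA.posSemidef.1.eigenvectorUnitary : Matrix (Fin n) (Fin n) ℝ)

lemma Wrcd_eq {n : ℕ} (A : Matrix (Fin n) (Fin n) ℝ) (hA : A.PosDef) (p : Fin n → ℝ) :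
    Wrcd A hA p = sqrtA hA * Matrix.diagonal (fun i => p i / A i i) * sqrtA hA := rfl

lemma sqrtA_posSemidef {n : ℕ} {A : Matrix (Fin n) (Fin n) ℝ} (hA : A.PosDef) :
    (sqrtA hA).PosSemidef := by
  have hD : (Matrix.diagonal ((↑) ∘ (hA.posSemidef.1.eigenvalues · |>.sqrt)) :
      Matrix (Fin n) (Fin n) ℝ).PosSemidef := by
    rw [Matrix.posSemidef_diagonal_iff]
    intro i
    exact Real.sqrt_nonneg _
  exact hD.mul_mul_conjTranspose_same _

lemma sqrtA_mul_self {n : ℕ} {A : Matrix (Fin n) (Fin n) ℝ} (hA : A.PosDef) :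
    sqrtA hA * sqrtA hA = A := by
  have hU : (star hA.posSemidef.1.eigenvectorUnitary : Matrix (Fin n) (Fin n) ℝ) *
      hA.posSemidef.1.eigenvectorUnitary.1 = 1 := Unitary.star_mul_self_of_mem hA.posSemidef.1.eigenvectorUnitary.2
  have hDD : (Matrix.diagonal ((↑) ∘ (hA.posSemidef.1.eigenvalues · |>.sqrt)) :
      Matrix (Fin n) (Fin n) ℝ) * Matrix.diagonal ((↑) ∘ (hA.posSemidef.1.eigenvalues · |>.sqrt))
      = Matrix.diagonal (RCLike.ofReal ∘ hA.posSemidef.1.eigenvalues) := by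
    rw [Matrix.diagonal_mul_diagonal]
    congr 1
    funext i
    simp [Real.mul_self_sqrt (hA.posSemidef.eigenvalues_nonneg i)]
  conv_rhs => rw [hA.posSemidef.1.spectral_theorem, Unitary.conjStarAlgAut_apply]
  unfold sqrtA
  calc _ = hA.posSemidef.1.eigenvectorUnitary.1 *
      ((Matrix.diagonal ((↑) ∘ (hA.posSemidef.1.eigenvalues · |>.sqrt)) *
      ((star hA.posSemidef.1.eigenvectorUnitary : Matrix (Fin n) (Fin n) ℝ) *
      hA.posSemidef.1.eigenvectorUnitary.1)) *
      Matrix.diagonal ((↑) ∘ (hA.posSemidef.1.eigenvalues · |>.sqrt))) *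
      (star hA.posSemidef.1.eigenvectorUnitary : Matrix (Fin n) (Fin n) ℝ) := by
        simp only [Matrix.mul_assoc]
    _ = _ := by rw [hU, Matrix.mul_one, hDD]

lemma diag_pos_of_posDef {n : ℕ} {A : Matrix (Fin n) (Fin n) ℝ} (hA : A.PosDef)
    (k : Fin n) : 0 < A k k := by
  exact hA.diag_pos

lemma wrcd_posSemidef {n : ℕ} (A : Matrix (Fin n) (Fin n) ℝ) (hA : A.PosDef)
    (p : Fin n → ℝ) (hp : ∀ i, 0 < p i) : (Wrcd A hA p).PosSemidef := by
  have hD : (Matrix.diagonal (fun i => p i / A i i)).PosSemidef := by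
    rw [Matrix.posSemidef_diagonal_iff]
    intro i
    exact le_of_lt (div_pos (hp i) (diag_pos_of_posDef hA i))
  have hS : (sqrtA hA).PosSemidef := sqrtA_posSemidef hA
  have := hD.mul_mul_conjTranspose_same (sqrtA hA)
  rw [hS.isHermitian.eq] at this
  exact this

theorem stmt7 {n : ℕ} (A : Matrix (Fin n) (Fin n) ℝ) (hA : A.PosDef)
    (p : Fin n → ℝ) (hp : ∀ i, 0 < p i) (hpsum : ∑ i, p i = 1)
    (hW : (Wrcd A hA p).IsHermitian) :
    (⨅ i, hW.eigenvalues i) ≤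
      (n : ℝ)⁻¹ * (∏ k, hA.1.eigenvalues k / A k k) ^ ((n : ℝ)⁻¹) := by
  rcases Nat.eq_zero_or_pos n with hn | hn
  · subst hn
    simp [iInf_of_empty, Real.sInf_empty]
  have hn0 : (n : ℝ) ≠ 0 := Nat.cast_ne_zero.2 hn.ne'
  haveI : Nonempty (Fin n) := ⟨⟨0, hn⟩⟩
  have hpsd := wrcd_posSemidef A hA p hp
  -- the min eigenvalue
  set μ := ⨅ i, hW.eigenvalues i with hμ
  have hnonneg : ∀ i, 0 ≤ hW.eigenvalues i := fun i => hpsd.eigenvalues_nonneg i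
  have hμ0 : 0 ≤ μ := le_ciInf hnonneg
  have hμle : ∀ i, μ ≤ hW.eigenvalues i := fun i =>
    ciInf_le (Finite.bddBelow_range _) i
  -- determinant computation
  have hdet : (Wrcd A hA p).det =
      (∏ k, hA.1.eigenvalues k / A k k) * ∏ k, p k := by
    have hsq : (sqrtA hA).det * (sqrtA hA).det = A.det := by
      rw [← Matrix.det_mul, sqrtA_mul_self hA]
    have hdetA : A.det = ∏ k, hA.1.eigenvalues k := by
      simpa using hA.1.det_eq_prod_eigenvalues
    rw [Wrcd_eq, Matrix.det_mul, Matrix.det_mul, Matrix.det_diagonal]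
    rw [show (sqrtA hA).det * (∏ i, p i / A i i) * (sqrtA hA).det
        = ((sqrtA hA).det * (sqrtA hA).det) * ∏ i, p i / A i i by ring,
      hsq, hdetA, ← Finset.prod_mul_distrib, ← Finset.prod_mul_distrib]
    exact Finset.prod_congr rfl fun k _ => by ring
  have hdet' : (Wrcd A hA p).det = ∏ i, hW.eigenvalues i := by
    simpa using hW.det_eq_prod_eigenvalues
  -- μ^n ≤ det
  have hpow : μ ^ n ≤ (Wrcd A hA p).det := by
    rw [hdet']
    calc μ ^ n = ∏ _i : Fin n, μ := by simp
      _ ≤ ∏ i, hW.eigenvalues i :=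
        Finset.prod_le_prod (fun i _ => hμ0) (fun i _ => hμle i)
  have hC0 : (0:ℝ) ≤ ∏ k, hA.1.eigenvalues k / A k k :=
    Finset.prod_nonneg fun k _ =>
      le_of_lt (div_pos (hA.eigenvalues_pos k) (diag_pos_of_posDef hA k))
  have hP0 : (0:ℝ) ≤ ∏ k, p k := Finset.prod_nonneg fun k _ => (hp k).le
  have hdet0 : (0:ℝ) ≤ (Wrcd A hA p).det := hdet ▸ mul_nonneg hC0 hP0
  -- μ ≤ det^{1/n}
  have h1 : μ ≤ (Wrcd A hA p).det ^ ((n:ℝ)⁻¹) := by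
    rw [← Real.pow_rpow_inv_natCast hμ0 hn.ne']
    exact Real.rpow_le_rpow (pow_nonneg hμ0 n) hpow (by positivity)
  -- det^{1/n} = C^{1/n} * P^{1/n}
  have h2 : (Wrcd A hA p).det ^ ((n:ℝ)⁻¹)
      = (∏ k, hA.1.eigenvalues k / A k k) ^ ((n:ℝ)⁻¹) * (∏ k, p k) ^ ((n:ℝ)⁻¹) := by
    rw [hdet, Real.mul_rpow hC0 hP0]
  -- AM-GM : P^{1/n} ≤ 1/n
  have h3 : (∏ k, p k) ^ ((n:ℝ)⁻¹) ≤ (n:ℝ)⁻¹ := by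
    have := Real.geom_mean_le_arith_mean_weighted Finset.univ (fun _ => (n:ℝ)⁻¹) p
      (fun i _ => by positivity)
      (by simp [Finset.card_univ, mul_comm]; field_simp)
      (fun i _ => (hp i).le)
    calc (∏ k, p k) ^ ((n:ℝ)⁻¹) = ∏ i, p i ^ ((n:ℝ)⁻¹) := by
          rw [← Real.finset_prod_rpow _ _ (fun i _ => (hp i).le)]
      _ ≤ ∑ i, (n:ℝ)⁻¹ * p i := this
      _ = (n:ℝ)⁻¹ := by rw [← Finset.mul_sum, hpsum, mul_one]
  calc μ ≤ (Wrcd A hA p).det ^ ((n:ℝ)⁻¹) := h1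
    _ = (∏ k, hA.1.eigenvalues k / A k k) ^ ((n:ℝ)⁻¹) * (∏ k, p k) ^ ((n:ℝ)⁻¹) := h2
    _ ≤ (∏ k, hA.1.eigenvalues k / A k k) ^ ((n:ℝ)⁻¹) * (n:ℝ)⁻¹ :=
        mul_le_mul_of_nonneg_left h3 (Real.rpow_nonneg hC0 _)
    _ = (n : ℝ)⁻¹ * (∏ k, hA.1.eigenvalues k / A k k) ^ ((n:ℝ)⁻¹) := mul_comm _ _
end

section
/- Let s_1, …, s_m ∈ ℝⁿ be nonzero vectors with probabilities p_1, …, p_m > 0 summing to 1, assume H := Σ_j p_j s_j s_jᵀ/(s_jᵀ A s_j) is invertible, and let W := A^{1/2} H A^{1/2}. Fix a mini-batch size τ ≥ 1, let ξ(τ) := 1/τ + (1 − 1/τ)λ_max(W), and let 0 < ω < 2/ξ(τ). Define the one-step mini-batch update: given x, draw indices j_1, …, j_τ independently with probabilities p, and set x' := (1/τ) Σ_{l=1}^τ (x − ω·(s_{j_l}ᵀ(Ax − b)/(s_{j_l}ᵀ A s_{j_l})) s_{j_l}). Then for every x_0 and every t ≥ 0, the expectation of ‖x_t − x*‖_A²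 over the t·τ independent index draws satisfies E‖x_t − x*‖_A² ≤ ρ(ω,τ)^t ‖x_0 − x*‖_A², where ρ(ω,τ) := 1 − ω(2 − ω ξ(τ)) λ_min(W). In particular, for ω = 1/ξ(τ) one has ρ = 1 − λ_min(W)/(1/τ + (1 − 1/τ)λ_max(W)). -/
open Matrix BigOperators Finset

/-- One step of stochastic descent with direction `s` and stepsize `ω`. -/
noncomputable def sdStep {n : ℕ} (A : Matrix (Fin n) (Fin n) ℝ) (b : Fin n → ℝ)
    (ω : ℝ) (s x : Fin n → ℝ) : Fin n → ℝ :=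
  x - (ω * (s ⬝ᵥ (A *ᵥ x - b)) / (s ⬝ᵥ A *ᵥ s)) • s

/-- One mini-batch step: average of `τ` stochastic descent steps, one for each
drawn index `js l`. -/
noncomputable def mbStep {n m τ : ℕ} (A : Matrix (Fin n) (Fin n) ℝ) (b : Fin n → ℝ)
    (ω : ℝ) (s : Fin m → Fin n → ℝ) (js : Fin τ → Fin m) (x : Fin n → ℝ) : Fin n → ℝ :=
  (τ : ℝ)⁻¹ • ∑ l : Fin τ, sdStep A b ω (s (js l)) x

/-- The mini-batch iterate after `t` steps, given the `t × τ` array `σ` of drawn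
indices. -/
noncomputable def mbIter {n m τ t : ℕ} (A : Matrix (Fin n) (Fin n) ℝ) (b : Fin n → ℝ)
    (ω : ℝ) (s : Fin m → Fin n → ℝ) (x0 : Fin n → ℝ)
    (σ : Fin t → Fin τ → Fin m) : Fin n → ℝ :=
  (List.ofFn σ).foldl (fun x js => mbStep A b ω s js x) x0

section

open scoped ComplexOrder

/-- The square root of a positive semidefinite matrix, as defined in Mathlib (Dec 2024)
under this name; it has since been removed from Mathlib. -/
noncomputable def Matrix.PosSemidef.sqrt {n 𝕜 : Type*} [Fintype n] [DecidableEq n] [RCLike 𝕜]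
    {A : Matrix n n 𝕜} (hA : A.PosSemidef) : Matrix n n 𝕜 :=
  hA.1.eigenvectorUnitary.1 * diagonal ((↑) ∘ (√·) ∘ hA.1.eigenvalues) *
  (star hA.1.eigenvectorUnitary : Matrix n n 𝕜)

end

lemma psd_sqrt_mul_self' {n : ℕ} {A : Matrix (Fin n) (Fin n) ℝ} (hA : A.PosSemidef) :
    hA.sqrt * hA.sqrt = A := by
  have hU : (star hA.1.eigenvectorUnitary : Matrix (Fin n) (Fin n) ℝ) * hA.1.eigenvectorUnitary.1 = 1 :=
    Unitary.coe_star_mul_self _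
  have hD : diagonal ((↑) ∘ (√·) ∘ hA.1.eigenvalues) * diagonal ((↑) ∘ (√·) ∘ hA.1.eigenvalues)
      = diagonal (RCLike.ofReal ∘ hA.1.eigenvalues : Fin n → ℝ) := by
    rw [diagonal_mul_diagonal]
    congr 1
    funext i
    simp [Real.mul_self_sqrt (hA.eigenvalues_nonneg i)]
  conv_rhs => rw [hA.1.spectral_theorem, Unitary.conjStarAlgAut_apply]
  unfold Matrix.PosSemidef.sqrt
  calc _ = hA.1.eigenvectorUnitary.1 * (diagonal ((↑) ∘ (√·) ∘ hA.1.eigenvalues) *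
      ((star hA.1.eigenvectorUnitary : Matrix (Fin n) (Fin n) ℝ) * hA.1.eigenvectorUnitary.1) *
      diagonal ((↑) ∘ (√·) ∘ hA.1.eigenvalues)) * (star hA.1.eigenvectorUnitary : Matrix (Fin n) (Fin n) ℝ) := by
        simp only [Matrix.mul_assoc]; rfl
    _ = _ := by rw [hU, Matrix.mul_one, hD]

lemma psd_sqrt_transpose' {n : ℕ} {A : Matrix (Fin n) (Fin n) ℝ} (hA : A.PosSemidef) :
    hA.sqrtᵀ = hA.sqrt := by
  unfold Matrix.PosSemidef.sqrt
  rw [transpose_mul, transpose_mul, diagonal_transpose, Matrix.mul_assoc]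
  congr 1

section helpers

lemma dotProduct_sum' {n k : ℕ} (v : Fin n → ℝ) (f : Fin k → Fin n → ℝ) :
    v ⬝ᵥ (∑ j, f j) = ∑ j, v ⬝ᵥ f j := by
  simp only [dotProduct, Finset.sum_apply, Finset.mul_sum]
  rw [Finset.sum_comm]

lemma sum_dotProduct' {n k : ℕ} (v : Fin n → ℝ) (f : Fin k → Fin n → ℝ) :
    (∑ j, f j) ⬝ᵥ v = ∑ j, f j ⬝ᵥ v := by
  rw [dotProduct_comm, dotProduct_sum']
  exact Finset.sum_congr rfl fun j _ => dotProduct_comm _ _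

lemma sum_mulVec' {n k : ℕ} (C : Fin k → Matrix (Fin n) (Fin n) ℝ) (w : Fin n → ℝ) :
    (∑ j, C j) *ᵥ w = ∑ j, C j *ᵥ w := by
  ext i
  simp only [mulVec, dotProduct, Finset.sum_apply, Finset.sum_apply', Finset.sum_mul]
  rw [Finset.sum_comm]
  refine Finset.sum_congr rfl fun x _ => ?_
  rw [Matrix.sum_apply, Finset.sum_mul]

lemma mulVec_sum' {n k : ℕ} (M : Matrix (Fin n) (Fin n) ℝ) (f : Fin k → Fin n → ℝ) :
    M *ᵥ (∑ j, f j) = ∑ j, M *ᵥ f j := map_sum M.mulVecLin f univ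

lemma vecMulVec_mulVec' {n : ℕ} (x y w : Fin n → ℝ) : vecMulVec x y *ᵥ w = (y ⬝ᵥ w) • x := by
  ext i
  simp only [vecMulVec, mulVec, dotProduct, Pi.smul_apply, smul_eq_mul, of_apply, Finset.sum_mul]
  exact Finset.sum_congr rfl fun k _ => by ring

end helpers

section spec
variable {n : ℕ} {W : Matrix (Fin n) (Fin n) ℝ} (hW : W.IsHermitian)

noncomputable def evec (i : Fin n) : Fin n → ℝ :=
  (WithLp.equiv 2 (Fin n → ℝ)) (hW.eigenvectorBasis i)

lemma inner_eq_dot (x y : EuclideanSpace ℝ (Fin n)) :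
    (inner ℝ x y : ℝ) = (WithLp.equiv 2 (Fin n → ℝ) x) ⬝ᵥ (WithLp.equiv 2 (Fin n → ℝ) y) := by
  simp [PiLp.inner_apply, dotProduct, mul_comm]

lemma dot_decomp (x y : Fin n → ℝ) :
    x ⬝ᵥ y = ∑ i, (evec hW i ⬝ᵥ x) * (evec hW i ⬝ᵥ y) := by
  have h := (hW.eigenvectorBasis).sum_inner_mul_inner
    ((WithLp.equiv 2 (Fin n → ℝ)).symm x) ((WithLp.equiv 2 (Fin n → ℝ)).symm y)
  rw [inner_eq_dot] at h
  simp only [Equiv.apply_symm_apply] at h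
  rw [← h]
  refine Finset.sum_congr rfl fun i _ => ?_
  rw [inner_eq_dot, inner_eq_dot]
  simp only [Equiv.apply_symm_apply]
  rw [dotProduct_comm x]
  rfl

lemma dot_W (u : Fin n → ℝ) (i : Fin n) :
    evec hW i ⬝ᵥ (W *ᵥ u) = hW.eigenvalues i * (evec hW i ⬝ᵥ u) := by
  rw [dotProduct_mulVec, ← mulVec_transpose]
  have ht : Wᵀ = W := by
    have := hW.eq
    rwa [conjTranspose_eq_transpose_of_trivial] at this
  rw [ht]
  simp only [evec]
  erw [hW.mulVec_eigenvectorBasis]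
  simp [smul_dotProduct]

lemma L1 (u : Fin n → ℝ) : u ⬝ᵥ u = ∑ i, (evec hW i ⬝ᵥ u)^2 := by
  rw [dot_decomp hW]; simp [sq]

lemma L2 (u : Fin n → ℝ) :
    u ⬝ᵥ (W *ᵥ u) = ∑ i, hW.eigenvalues i * (evec hW i ⬝ᵥ u)^2 := by
  rw [dot_decomp hW]
  refine Finset.sum_congr rfl fun i _ => ?_
  rw [dot_W hW]; ring

lemma L3 (u : Fin n → ℝ) :
    (W *ᵥ u) ⬝ᵥ (W *ᵥ u) = ∑ i, (hW.eigenvalues i)^2 * (evec hW i ⬝ᵥ u)^2 := by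
  rw [dot_decomp hW]
  refine Finset.sum_congr rfl fun i _ => ?_
  rw [dot_W hW]; ring

lemma evec_norm (i : Fin n) : evec hW i ⬝ᵥ evec hW i = 1 := by
  have h := orthonormal_iff_ite.mp (hW.eigenvectorBasis).orthonormal i i
  rw [inner_eq_dot] at h
  simpa [evec] using h

lemma eig_eq (i : Fin n) :
    hW.eigenvalues i = evec hW i ⬝ᵥ (W *ᵥ evec hW i) := by
  rw [dot_W hW, evec_norm hW, mul_one]

end spec

section expect
variable {m τ : ℕ} {p : Fin m → ℝ} (hpsum : ∑ j, p j = 1)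

lemma expE (φ : Fin τ → Fin m → ℝ) :
    ∑ js : Fin τ → Fin m, ∏ l, φ l (js l) = ∏ l, ∑ j, φ l j := by
  rw [Finset.prod_univ_sum, Fintype.piFinset_univ]

include hpsum

lemma Eone (l0 : Fin τ) (h : Fin m → ℝ) :
    ∑ js : Fin τ → Fin m, (∏ l, p (js l)) * h (js l0) = ∑ j, p j * h j := by
  have key : ∀ js : Fin τ → Fin m,
      (∏ l, p (js l)) * h (js l0) = ∏ l, (p (js l) * if l = l0 then h (js l) else 1) := by
    intro js
    rw [Finset.prod_mul_distrib]
    congr 1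
    simp [Finset.prod_ite_eq']
  simp_rw [key]
  rw [expE (fun l j => p j * if l = l0 then h j else 1)]
  have : ∀ l : Fin τ, (∑ j, p j * if l = l0 then h j else 1)
      = if l = l0 then ∑ j, p j * h j else 1 := by
    intro l
    split_ifs <;> simp [hpsum]
  simp_rw [this]
  simp [Finset.prod_ite_eq']

lemma Epair {l0 k0 : Fin τ} (hlk : l0 ≠ k0) (h1 h2 : Fin m → ℝ) :
    ∑ js : Fin τ → Fin m, (∏ l, p (js l)) * (h1 (js l0) * h2 (js k0)) =
      (∑ j, p j * h1 j) * (∑ j, p j * h2 j) := by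
  have key : ∀ js : Fin τ → Fin m,
      (∏ l, p (js l)) * (h1 (js l0) * h2 (js k0)) =
      ∏ l, (p (js l) * ((if l = l0 then h1 (js l) else 1) * (if l = k0 then h2 (js l) else 1))) := by
    intro js
    rw [Finset.prod_mul_distrib, Finset.prod_mul_distrib]
    simp [Finset.prod_ite_eq', mul_assoc]
  simp_rw [key]
  rw [expE (fun l j => p j * ((if l = l0 then h1 j else 1) * (if l = k0 then h2 j else 1)))]
  have : ∀ l : Fin τ, (∑ j, p j * ((if l = l0 then h1 j else 1) * (if l = k0 then h2 j else 1)))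
      = (if l = l0 then ∑ j, p j * h1 j else 1) * (if l = k0 then ∑ j, p j * h2 j else 1) := by
    intro l
    by_cases e1 : l = l0 <;> by_cases e2 : l = k0
    · exact absurd (e1 ▸ e2 ▸ rfl : l0 = k0) (by subst e1 e2; exact absurd rfl hlk)
    · simp [e1, e2, hlk]
    · simp [e1, e2, hlk.symm]
    · simp [e1, e2, hpsum]
  simp_rw [this]
  rw [Finset.prod_mul_distrib]
  simp [Finset.prod_ite_eq']
end expect

set_option maxHeartbeats 2000000 in
theorem key_facts {n m : ℕ} (A : Matrix (Fin n) (Fin n) ℝ) (hA : A.PosDef)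
    (b : Fin n → ℝ) (s : Fin m → Fin n → ℝ) (hs : ∀ j, s j ≠ 0)
    (p : Fin m → ℝ) (hp : ∀ j, 0 < p j) (hpsum : ∑ j, p j = 1)
    (H : Matrix (Fin n) (Fin n) ℝ)
    (hH : H = ∑ j, (p j / (s j ⬝ᵥ A *ᵥ s j)) • vecMulVec (s j) (s j))
    (W : Matrix (Fin n) (Fin n) ℝ)
    (hWdef : W = hA.posSemidef.sqrt * H * hA.posSemidef.sqrt)
    (hW : W.IsHermitian)
    (τ : ℕ) (hτ : 1 ≤ τ)
    (ξ : ℝ) (hξ : ξ = (τ : ℝ)⁻¹ + (1 - (τ : ℝ)⁻¹) * ⨆ i, hW.eigenvalues i)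
    (ω : ℝ) (hω0 : 0 < ω) (hω2 : ω < 2 / ξ) :
    (0 ≤ 1 - ω * (2 - ω * ξ) * ⨅ i, hW.eigenvalues i) ∧
    ∀ x : Fin n → ℝ,
      ∑ js : Fin τ → Fin m, (∏ l, p (js l)) *
        ((mbStep A b ω s js x - A⁻¹ *ᵥ b) ⬝ᵥ A *ᵥ (mbStep A b ω s js x - A⁻¹ *ᵥ b)) ≤
      (1 - ω * (2 - ω * ξ) * ⨅ i, hW.eigenvalues i) *
        ((x - A⁻¹ *ᵥ b) ⬝ᵥ A *ᵥ (x - A⁻¹ *ᵥ b)) := by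
  -- basic positivity of ξ and ω·ξ < 2
  have hξpos : 0 < ξ := by
    by_contra hc
    push_neg at hc
    have : 2 / ξ ≤ 0 := div_nonpos_of_nonneg_of_nonpos (by norm_num) hc
    linarith
  have hωξ : ω * ξ < 2 := (lt_div_iff₀ hξpos).mp hω2
  have hτ0 : (τ : ℝ) ≠ 0 := Nat.cast_ne_zero.2 (by omega)
  have hτ1 : (1:ℝ) ≤ (τ:ℝ) := by exact_mod_cast hτ
  have hti0 : 0 < (τ:ℝ)⁻¹ := by positivity
  have hti1 : (τ:ℝ)⁻¹ ≤ 1 := by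
    rw [inv_le_one_iff₀]; right; exact hτ1
  -- degenerate case n = 0
  rcases Nat.eq_zero_or_pos n with rfl | hn
  · have hinf : (⨅ i, hW.eigenvalues i) = 0 := Real.iInf_of_isEmpty _
    constructor
    · rw [hinf]; norm_num
    · intro x
      have hz : ∀ y z : Fin 0 → ℝ, y ⬝ᵥ z = 0 := by
        intro y z; simp [dotProduct]
      simp [hz]
  -- main case
  haveI : Nonempty (Fin n) := ⟨⟨0, hn⟩⟩
  set M := hA.posSemidef.sqrt with hM
  have hMM : M * M = A := psd_sqrt_mul_self' hA.posSemidef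
  have hMsym : Mᵀ = M := by
    exact psd_sqrt_transpose' hA.posSemidef
  have hvecM : ∀ v : Fin n → ℝ, v ᵥ* M = M *ᵥ v := by
    intro v
    conv_lhs => rw [← hMsym]
    exact vecMul_transpose M v
  have hdotM : ∀ v w : Fin n → ℝ, v ⬝ᵥ (M *ᵥ w) = (M *ᵥ v) ⬝ᵥ w := by
    intro v w; rw [dotProduct_mulVec, hvecM]
  have hAdot : ∀ v w : Fin n → ℝ, v ⬝ᵥ (A *ᵥ w) = (M *ᵥ v) ⬝ᵥ (M *ᵥ w) := by
    intro v w
    rw [← hMM, ← mulVec_mulVec, hdotM]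
  set g : Fin m → Fin n → ℝ := fun j => M *ᵥ s j with hg
  set a : Fin m → ℝ := fun j => s j ⬝ᵥ A *ᵥ s j with ha
  have hag : ∀ j, a j = g j ⬝ᵥ g j := fun j => hAdot (s j) (s j)
  have hapos : ∀ j, 0 < a j := fun j => hA.dotProduct_mulVec_pos (hs j)
  -- action of W
  have hWv : ∀ v : Fin n → ℝ, W *ᵥ v = ∑ j, ((p j * (g j ⬝ᵥ v)) / a j) • g j := by
    intro v
    rw [hWdef, hH, ← mulVec_mulVec, ← mulVec_mulVec]
    have hHv : (∑ j, (p j / (s j ⬝ᵥ A *ᵥ s j)) • vecMulVec (s j) (s j)) *ᵥ (M *ᵥ v)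
        = ∑ j, ((p j * (g j ⬝ᵥ v)) / a j) • s j := by
      rw [sum_mulVec']
      refine Finset.sum_congr rfl fun j _ => ?_
      rw [smul_mulVec, vecMulVec_mulVec', hdotM, smul_smul]
      simp only [hg, ha]
      congr 1
      field_simp
    rw [hHv, mulVec_sum']
    refine Finset.sum_congr rfl fun j _ => ?_
    exact M.mulVec_smul _ _
  have hWform : ∀ v : Fin n → ℝ, v ⬝ᵥ (W *ᵥ v) = ∑ j, p j * ((g j ⬝ᵥ v)^2 / a j) := by
    intro v
    rw [hWv, dotProduct_sum']
    refine Finset.sum_congr rfl fun j _ => ?_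
    rw [dotProduct_smul, smul_eq_mul, dotProduct_comm]
    field_simp
  -- eigenvalue bounds
  have hq0 : ∀ v : Fin n → ℝ, 0 ≤ v ⬝ᵥ (W *ᵥ v) := by
    intro v
    rw [hWform]
    refine Finset.sum_nonneg fun j _ => ?_
    have := (hp j).le
    have := (hapos j).le
    positivity
  have hq1 : ∀ v : Fin n → ℝ, v ⬝ᵥ (W *ᵥ v) ≤ v ⬝ᵥ v := by
    intro v
    rw [hWform]
    calc ∑ j, p j * ((g j ⬝ᵥ v)^2 / a j) ≤ ∑ j, p j * (v ⬝ᵥ v) := by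
          refine Finset.sum_le_sum fun j _ => ?_
          refine mul_le_mul_of_nonneg_left ?_ (hp j).le
          rw [div_le_iff₀ (hapos j)]
          have hcs := Finset.sum_mul_sq_le_sq_mul_sq Finset.univ (g j) v
          have h1 : (g j ⬝ᵥ v) ^2 ≤ (g j ⬝ᵥ g j) * (v ⬝ᵥ v) := by
            simpa [dotProduct, sq] using hcs
          calc (g j ⬝ᵥ v)^2 ≤ (g j ⬝ᵥ g j) * (v ⬝ᵥ v) := h1
            _ = (v ⬝ᵥ v) * a j := by rw [hag j]; ring
      _ = v ⬝ᵥ v := by rw [← Finset.sum_mul, hpsum, one_mul]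
  have hlam0 : ∀ i, 0 ≤ hW.eigenvalues i := by
    intro i; rw [eig_eq hW]; exact hq0 _
  have hlam1 : ∀ i, hW.eigenvalues i ≤ 1 := by
    intro i
    have h := hq1 (evec hW i)
    rw [← eig_eq hW, evec_norm hW] at h
    exact h
  set lam := hW.eigenvalues with hlam
  set lmin := ⨅ i, lam i with hlmin
  set lmax := ⨆ i, lam i with hlmax
  have hmin_le : ∀ i, lmin ≤ lam i := fun i =>
    ciInf_le (Set.Finite.bddBelow (Set.finite_range _)) i
  have hle_max : ∀ i, lam i ≤ lmax := fun i =>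
    le_ciSup (Set.Finite.bddAbove (Set.finite_range _)) i
  have hmin0 : 0 ≤ lmin := le_ciInf hlam0
  have hmax1 : lmax ≤ 1 := ciSup_le hlam1
  have hminmax : lmin ≤ lmax := le_trans (hmin_le (Classical.arbitrary _))
    (hle_max (Classical.arbitrary _))
  have hminξ : lmin ≤ ξ := by
    rw [hξ]
    nlinarith [mul_nonneg hti0.le (sub_nonneg.2 hmax1)]
  have hρ0 : 0 ≤ 1 - ω * (2 - ω * ξ) * lmin := by
    nlinarith [mul_nonneg hmin0 (sq_nonneg (1 - ω*ξ)), hξpos, hminξ, hmin0]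
  refine ⟨hρ0, ?_⟩
  intro x
  -- fixed point
  set xs : Fin n → ℝ := A⁻¹ *ᵥ b with hxs
  have hAxs : A *ᵥ xs = b := by
    rw [hxs, mulVec_mulVec, Matrix.mul_nonsing_inv A
      ((Matrix.isUnit_iff_isUnit_det A).mp hA.isUnit), one_mulVec]
  set e : Fin n → ℝ := x - xs with he
  set u : Fin n → ℝ := M *ᵥ e with hu
  set d : Fin m → Fin n → ℝ := fun j => u - ((ω * (g j ⬝ᵥ u)) / a j) • g j with hd
  -- one sd step
  have hsd : ∀ j, sdStep A b ω (s j) x - xs = e - ((ω * (g j ⬝ᵥ u)) / a j) • s j := by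
    intro j
    rw [sdStep]
    have h1 : A *ᵥ x - b = A *ᵥ e := by
      rw [he, mulVec_sub, hAxs]
    have h2 : s j ⬝ᵥ (A *ᵥ e) = g j ⬝ᵥ u := by
      rw [hAdot, hu]
    rw [h1, h2, sub_right_comm, ← he]
  -- minibatch step in M-coordinates
  have hmb : ∀ js : Fin τ → Fin m,
      M *ᵥ (mbStep A b ω s js x - xs) = (τ:ℝ)⁻¹ • ∑ l, d (js l) := by
    intro js
    have h1 : mbStep A b ω s js x - xs
        = (τ:ℝ)⁻¹ • ∑ l, (sdStep A b ω (s (js l)) x - xs) := by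
      rw [mbStep, Finset.sum_sub_distrib, smul_sub, Finset.sum_const, Finset.card_univ,
        Fintype.card_fin]
      congr 1
      rw [← Nat.cast_smul_eq_nsmul ℝ, smul_smul, inv_mul_cancel₀ hτ0, one_smul]
    rw [h1, M.mulVec_smul, mulVec_sum']
    congr 1
    refine Finset.sum_congr rfl fun l _ => ?_
    rw [hsd, mulVec_sub, M.mulVec_smul, ← hu]
  -- quadratic form of one minibatch step
  have hquad : ∀ js : Fin τ → Fin m,
      (mbStep A b ω s js x - xs) ⬝ᵥ A *ᵥ (mbStep A b ω s js x - xs)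
        = (τ:ℝ)⁻¹ * ((τ:ℝ)⁻¹ * ∑ l, ∑ k, d (js l) ⬝ᵥ d (js k)) := by
    intro js
    rw [hAdot, hmb js, smul_dotProduct, dotProduct_smul, smul_eq_mul, smul_eq_mul]
    congr 2
    rw [sum_dotProduct']
    exact Finset.sum_congr rfl fun l _ => dotProduct_sum' _ _
  set D : ℝ := ∑ j, p j * (d j ⬝ᵥ d j) with hD
  set db : Fin n → ℝ := ∑ j, p j • d j with hdb
  have hdiag : ∀ l : Fin τ, ∑ js : Fin τ → Fin m,
      (∏ l', p (js l')) * (d (js l) ⬝ᵥ d (js l)) = D :=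
    fun l => Eone hpsum l (fun j => d j ⬝ᵥ d j)
  have hoff : ∀ l k : Fin τ, l ≠ k →
      ∑ js : Fin τ → Fin m, (∏ l', p (js l')) * (d (js l) ⬝ᵥ d (js k)) = db ⬝ᵥ db := by
    intro l k hlk
    have h1 : ∀ js : Fin τ → Fin m, d (js l) ⬝ᵥ d (js k) = ∑ i, d (js l) i * d (js k) i :=
      fun _ => rfl
    simp_rw [h1, Finset.mul_sum]
    rw [Finset.sum_comm]
    have h2 : ∀ i, ∑ js : Fin τ → Fin m, (∏ l', p (js l')) * (d (js l) i * d (js k) i)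
        = (∑ j, p j * d j i) * (∑ j, p j * d j i) :=
      fun i => Epair hpsum hlk (fun j => d j i) (fun j => d j i)
    simp_rw [h2]
    rw [hdb]
    simp [dotProduct, Finset.sum_apply]
  have hdbeq : db = u - ω • (W *ᵥ u) := by
    rw [hdb, hWv]
    rw [Finset.smul_sum]
    simp_rw [hd, smul_sub]
    rw [Finset.sum_sub_distrib]
    congr 1
    · rw [← Finset.sum_smul, hpsum, one_smul]
    · refine Finset.sum_congr rfl fun j _ => ?_
      rw [smul_smul, smul_smul]
      congr 1
      ring
  have hddot : ∀ j, d j ⬝ᵥ d j = u ⬝ᵥ u - (2*ω - ω^2) * ((g j ⬝ᵥ u)^2 / a j) := by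
    intro j
    have hgg : g j ⬝ᵥ g j = a j := (hag j).symm
    have hug : u ⬝ᵥ g j = g j ⬝ᵥ u := dotProduct_comm u (g j)
    have ha0 : a j ≠ 0 := (hapos j).ne'
    simp only [hd, sub_dotProduct, dotProduct_sub, smul_dotProduct, dotProduct_smul,
      smul_eq_mul]
    rw [hgg, hug]
    field_simp
    ring
  have hDval : D = u ⬝ᵥ u - (2*ω - ω^2) * (u ⬝ᵥ (W *ᵥ u)) := by
    rw [hD, hWform u]
    simp_rw [hddot, mul_sub]
    rw [Finset.sum_sub_distrib, ← Finset.sum_mul, hpsum, one_mul, Finset.mul_sum]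
    congr 1
    exact Finset.sum_congr rfl fun j _ => by ring
  have hFval : db ⬝ᵥ db = u ⬝ᵥ u - 2*ω*(u ⬝ᵥ (W *ᵥ u)) + ω^2*((W *ᵥ u) ⬝ᵥ (W *ᵥ u)) := by
    rw [hdbeq]
    simp only [sub_dotProduct, dotProduct_sub, smul_dotProduct, dotProduct_smul, smul_eq_mul]
    rw [dotProduct_comm (W *ᵥ u) u]
    ring
  have hcount : ∑ js : Fin τ → Fin m, (∏ l, p (js l)) *
        ((mbStep A b ω s js x - xs) ⬝ᵥ A *ᵥ (mbStep A b ω s js x - xs))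
      = (τ:ℝ)⁻¹ * (τ:ℝ)⁻¹ * ((τ:ℝ) * D + ((τ:ℝ)^2 - (τ:ℝ)) * (db ⬝ᵥ db)) := by
    simp_rw [hquad]
    have h3 : ∀ js : Fin τ → Fin m,
        (∏ l, p (js l)) * ((τ:ℝ)⁻¹ * ((τ:ℝ)⁻¹ * ∑ l, ∑ k, d (js l) ⬝ᵥ d (js k)))
        = (τ:ℝ)⁻¹ * (τ:ℝ)⁻¹ * ∑ l, ∑ k, (∏ l', p (js l')) * (d (js l) ⬝ᵥ d (js k)) := by
      intro js
      rw [show (∏ l, p (js l)) * ((τ:ℝ)⁻¹ * ((τ:ℝ)⁻¹ * ∑ l, ∑ k, d (js l) ⬝ᵥ d (js k)))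
          = (τ:ℝ)⁻¹ * (τ:ℝ)⁻¹ * ((∏ l, p (js l)) * ∑ l, ∑ k, d (js l) ⬝ᵥ d (js k)) from by
        ring]
      congr 1
      rw [Finset.mul_sum]
      exact Finset.sum_congr rfl fun l _ => Finset.mul_sum _ _ _
    simp_rw [h3]
    rw [← Finset.mul_sum]
    congr 1
    rw [Finset.sum_comm]
    have h4 : ∀ l : Fin τ,
        ∑ js : Fin τ → Fin m, ∑ k, (∏ l', p (js l')) * (d (js l) ⬝ᵥ d (js k))
        = ∑ k, ∑ js : Fin τ → Fin m, (∏ l', p (js l')) * (d (js l) ⬝ᵥ d (js k)) :=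
      fun l => Finset.sum_comm
    simp_rw [h4]
    have h5 : ∀ l k : Fin τ, ∑ js : Fin τ → Fin m,
        (∏ l', p (js l')) * (d (js l) ⬝ᵥ d (js k)) = if l = k then D else db ⬝ᵥ db := by
      intro l k
      by_cases hlk : l = k
      · subst hlk; simp [hdiag l]
      · simp [hlk, hoff l k hlk]
    simp_rw [h5]
    have h6 : ∀ l k : Fin τ, (if l = k then D else db ⬝ᵥ db)
        = db ⬝ᵥ db + (if l = k then D - db ⬝ᵥ db else 0) := by
      intro l k; split_ifs <;> ring
    simp_rw [h6, Finset.sum_add_distrib, Finset.sum_ite_eq, Finset.mem_univ, if_true,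
      Finset.sum_const, Finset.card_univ, Fintype.card_fin, nsmul_eq_mul]
    ring
  rw [hcount]
  have hlincomb : ∀ α β γ : ℝ,
      α*(u ⬝ᵥ u) + β*(u ⬝ᵥ (W *ᵥ u)) + γ*((W *ᵥ u) ⬝ᵥ (W *ᵥ u))
        = ∑ i, (α + β*lam i + γ*(lam i)^2)*((evec hW i ⬝ᵥ u))^2 := by
    intro α β γ
    rw [L1 hW u, L2 hW u, L3 hW u, Finset.mul_sum, Finset.mul_sum, Finset.mul_sum,
      ← Finset.sum_add_distrib, ← Finset.sum_add_distrib]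
    exact Finset.sum_congr rfl fun i _ => by ring
  have hexpand : (τ:ℝ)⁻¹ * (τ:ℝ)⁻¹ * ((τ:ℝ) * D + ((τ:ℝ)^2 - (τ:ℝ)) * (db ⬝ᵥ db))
      = ∑ i, ((τ:ℝ)⁻¹ * (τ:ℝ)⁻¹ * ((τ:ℝ) + ((τ:ℝ)^2 - (τ:ℝ)))
          + ((τ:ℝ)⁻¹ * (τ:ℝ)⁻¹ * (-(τ:ℝ)*(2*ω - ω^2) - ((τ:ℝ)^2 - (τ:ℝ))*(2*ω)))*lam i
          + ((τ:ℝ)⁻¹ * (τ:ℝ)⁻¹ * (((τ:ℝ)^2 - (τ:ℝ))*ω^2))*(lam i)^2)*((evec hW i ⬝ᵥ u))^2 := by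
    rw [hDval, hFval, ← hlincomb]
    ring
  rw [hexpand]
  have hrhs : (1 - ω * (2 - ω * ξ) * lmin) * ((x - xs) ⬝ᵥ A *ᵥ (x - xs))
      = ∑ i, (1 - ω * (2 - ω * ξ) * lmin) * ((evec hW i ⬝ᵥ u))^2 := by
    rw [← he, hAdot, ← hu, L1 hW u, Finset.mul_sum]
  rw [hrhs]
  refine Finset.sum_le_sum fun i _ => ?_
  refine mul_le_mul_of_nonneg_right ?_ (sq_nonneg _)
  have hlmax_i := hle_max i
  have hlmin_i := hmin_le i
  have hl0 := hlam0 i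
  have h2ωξ : 0 < 2 - ω*ξ := by linarith
  have e1 : (τ:ℝ)⁻¹ * (τ:ℝ)⁻¹ * ((τ:ℝ) + ((τ:ℝ)^2 - (τ:ℝ))) = 1 := by
    field_simp
    ring
  have e2 : (τ:ℝ)⁻¹ * (τ:ℝ)⁻¹ * (-(τ:ℝ)*(2*ω - ω^2) - ((τ:ℝ)^2 - (τ:ℝ))*(2*ω))
      = -(2*ω) + ω^2*(τ:ℝ)⁻¹ := by
    field_simp
    ring
  have e3 : (τ:ℝ)⁻¹ * (τ:ℝ)⁻¹ * (((τ:ℝ)^2 - (τ:ℝ))*ω^2) = (1-(τ:ℝ)⁻¹)*ω^2 := by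
    field_simp
  rw [e1, e2, e3]
  have hint1 : 0 ≤ ω^2 * lam i * (1-(τ:ℝ)⁻¹) * (lmax - lam i) :=
    mul_nonneg (mul_nonneg (mul_nonneg (sq_nonneg ω) hl0) (sub_nonneg.2 hti1))
      (sub_nonneg.2 hlmax_i)
  have hint2 : 0 ≤ (ω * (2 - ω*ξ)) * (lam i - lmin) :=
    mul_nonneg (mul_nonneg hω0.le h2ωξ.le) (sub_nonneg.2 hlmin_i)
  have hxilam : ω^2 * lam i * ξ = ω^2 * lam i * ((τ:ℝ)⁻¹ + (1-(τ:ℝ)⁻¹)*lmax) := by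
    rw [← hξ]
  nlinarith [hint1, hint2, hxilam]

lemma mbIter_zero {n m τ : ℕ} (A : Matrix (Fin n) (Fin n) ℝ) (b : Fin n → ℝ)
    (ω : ℝ) (s : Fin m → Fin n → ℝ) (x0 : Fin n → ℝ) (σ : Fin 0 → Fin τ → Fin m) :
    mbIter A b ω s x0 σ = x0 := by
  simp [mbIter]

lemma mbIter_succ {n m τ t : ℕ} (A : Matrix (Fin n) (Fin n) ℝ) (b : Fin n → ℝ)
    (ω : ℝ) (s : Fin m → Fin n → ℝ) (x0 : Fin n → ℝ) (js : Fin τ → Fin m)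
    (σ : Fin t → Fin τ → Fin m) :
    mbIter A b ω s x0 (Fin.cons js σ) = mbIter A b ω s (mbStep A b ω s js x0) σ := by
  unfold mbIter
  rw [List.ofFn_succ]
  simp [Fin.cons_zero, Fin.cons_succ]


set_option maxHeartbeats 1000000 in
theorem stmt12 {n m : ℕ} (A : Matrix (Fin n) (Fin n) ℝ) (hA : A.PosDef)
    (b : Fin n → ℝ) (s : Fin m → Fin n → ℝ) (hs : ∀ j, s j ≠ 0)
    (p : Fin m → ℝ) (hp : ∀ j, 0 < p j) (hpsum : ∑ j, p j = 1)
    (H : Matrix (Fin n) (Fin n) ℝ)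
    (hH : H = ∑ j, (p j / (s j ⬝ᵥ A *ᵥ s j)) • vecMulVec (s j) (s j))
    (hHinv : IsUnit H)
    (W : Matrix (Fin n) (Fin n) ℝ)
    (hWdef : W = hA.posSemidef.sqrt * H * hA.posSemidef.sqrt)
    (hW : W.IsHermitian)
    (τ : ℕ) (hτ : 1 ≤ τ)
    (ξ : ℝ) (hξ : ξ = (τ : ℝ)⁻¹ + (1 - (τ : ℝ)⁻¹) * ⨆ i, hW.eigenvalues i)
    (ω : ℝ) (hω0 : 0 < ω) (hω2 : ω < 2 / ξ)
    (x0 : Fin n → ℝ) (t : ℕ) :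
    (∑ σ : Fin t → Fin τ → Fin m, (∏ j, ∏ l, p (σ j l)) *
        ((mbIter A b ω s x0 σ - A⁻¹ *ᵥ b) ⬝ᵥ A *ᵥ (mbIter A b ω s x0 σ - A⁻¹ *ᵥ b)) ≤
      (1 - ω * (2 - ω * ξ) * ⨅ i, hW.eigenvalues i) ^ t *
        ((x0 - A⁻¹ *ᵥ b) ⬝ᵥ A *ᵥ (x0 - A⁻¹ *ᵥ b))) ∧
    (ω = ξ⁻¹ →
      1 - ω * (2 - ω * ξ) * (⨅ i, hW.eigenvalues i) =
        1 - (⨅ i, hW.eigenvalues i) /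
          ((τ : ℝ)⁻¹ + (1 - (τ : ℝ)⁻¹) * ⨆ i, hW.eigenvalues i)) := by
  obtain ⟨hρ0, hstep⟩ := key_facts A hA b s hs p hp hpsum H hH W hWdef hW τ hτ ξ hξ ω hω0 hω2
  have hξpos : 0 < ξ := by
    by_contra hc
    push_neg at hc
    have : 2 / ξ ≤ 0 := div_nonpos_of_nonneg_of_nonpos (by norm_num) hc
    linarith
  set ρ : ℝ := 1 - ω * (2 - ω * ξ) * ⨅ i, hW.eigenvalues i with hρ
  constructor
  · induction t generalizing x0 with
    | zero =>
      have : ∀ σ : Fin 0 → Fin τ → Fin m, mbIter A b ω s x0 σ = x0 :=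
        fun σ => mbIter_zero A b ω s x0 σ
      simp [this]
    | succ t ih =>
      rw [← Equiv.sum_comp (Fin.consEquiv (fun _ : Fin (t+1) => Fin τ → Fin m))
        (fun σ => (∏ j, ∏ l, p (σ j l)) *
          ((mbIter A b ω s x0 σ - A⁻¹ *ᵥ b) ⬝ᵥ A *ᵥ (mbIter A b ω s x0 σ - A⁻¹ *ᵥ b)))]
      rw [Fintype.sum_prod_type]
      have hterm : ∀ (js : Fin τ → Fin m) (σ : Fin t → Fin τ → Fin m),
          (∏ j, ∏ l, p ((Fin.consEquiv (fun _ : Fin (t+1) => Fin τ → Fin m)) (js, σ) j l)) *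
            ((mbIter A b ω s x0 ((Fin.consEquiv _) (js, σ)) - A⁻¹ *ᵥ b) ⬝ᵥ
              A *ᵥ (mbIter A b ω s x0 ((Fin.consEquiv _) (js, σ)) - A⁻¹ *ᵥ b))
          = (∏ l, p (js l)) * ((∏ j, ∏ l, p (σ j l)) *
            ((mbIter A b ω s (mbStep A b ω s js x0) σ - A⁻¹ *ᵥ b) ⬝ᵥ
              A *ᵥ (mbIter A b ω s (mbStep A b ω s js x0) σ - A⁻¹ *ᵥ b))) := by
        intro js σ
        have he : (Fin.consEquiv (fun _ : Fin (t+1) => Fin τ → Fin m)) (js, σ)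
            = Fin.cons js σ := rfl
        rw [he, mbIter_succ, Fin.prod_univ_succ]
        simp only [Fin.cons_zero, Fin.cons_succ]
        ring
      simp_rw [hterm, ← Finset.mul_sum]
      have hstep1 : ∀ js : Fin τ → Fin m,
          ∑ σ : Fin t → Fin τ → Fin m, (∏ j, ∏ l, p (σ j l)) *
            ((mbIter A b ω s (mbStep A b ω s js x0) σ - A⁻¹ *ᵥ b) ⬝ᵥ
              A *ᵥ (mbIter A b ω s (mbStep A b ω s js x0) σ - A⁻¹ *ᵥ b))
          ≤ ρ ^ t * ((mbStep A b ω s js x0 - A⁻¹ *ᵥ b) ⬝ᵥ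
              A *ᵥ (mbStep A b ω s js x0 - A⁻¹ *ᵥ b)) := fun js => ih (mbStep A b ω s js x0)
      have hppos : ∀ js : Fin τ → Fin m, 0 ≤ ∏ l, p (js l) :=
        fun js => Finset.prod_nonneg fun l _ => (hp _).le
      calc ∑ js : Fin τ → Fin m, (∏ l, p (js l)) *
            (∑ σ : Fin t → Fin τ → Fin m, (∏ j, ∏ l, p (σ j l)) *
              ((mbIter A b ω s (mbStep A b ω s js x0) σ - A⁻¹ *ᵥ b) ⬝ᵥ
                A *ᵥ (mbIter A b ω s (mbStep A b ω s js x0) σ - A⁻¹ *ᵥ b)))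
          ≤ ∑ js : Fin τ → Fin m, (∏ l, p (js l)) *
            (ρ ^ t * ((mbStep A b ω s js x0 - A⁻¹ *ᵥ b) ⬝ᵥ
              A *ᵥ (mbStep A b ω s js x0 - A⁻¹ *ᵥ b))) := by
            refine Finset.sum_le_sum fun js _ => ?_
            exact mul_le_mul_of_nonneg_left (hstep1 js) (hppos js)
        _ = ρ ^ t * ∑ js : Fin τ → Fin m, (∏ l, p (js l)) *
            ((mbStep A b ω s js x0 - A⁻¹ *ᵥ b) ⬝ᵥ
              A *ᵥ (mbStep A b ω s js x0 - A⁻¹ *ᵥ b)) := by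
            rw [Finset.mul_sum]
            exact Finset.sum_congr rfl fun js _ => by ring
        _ ≤ ρ ^ t * (ρ * ((x0 - A⁻¹ *ᵥ b) ⬝ᵥ A *ᵥ (x0 - A⁻¹ *ᵥ b))) :=
            mul_le_mul_of_nonneg_left (hstep x0) (pow_nonneg hρ0 t)
        _ = ρ ^ (t+1) * ((x0 - A⁻¹ *ᵥ b) ⬝ᵥ A *ᵥ (x0 - A⁻¹ *ᵥ b)) := by ring
      done
      -- need the first line of calc to match
  · intro hωeq
    have hξ0 : ξ ≠ 0 := hξpos.ne'
    rw [hρ, hωeq, ← hξ, inv_mul_cancel₀ hξ0]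
    ring_nf
end
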